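/- A nonempty closed subset Z of Spc(K) is irreducible if and only if P := {a ∈ K : U(a) ∩ Z ≠ ∅} is a prime thick tensor-ideal; in that case Z is the closure of {P}, so every nonempty irreducible closed subset of Spc(K) has a unique generic point. -/

import Mathlib

open CategoryTheory CategoryTheory.Limits CategoryTheory.Pretriangulated
open CategoryTheory.MonoidalCategory
open ZeroObject

universe v u

variable (C : Type u) [Category.{v} C] [Preadditive C] [HasZeroObject C]
  [HasShift C ℤ] [∀ n : ℤ, (shiftFunctor C n).Additive] [Pretriangulated C]
  [HasBinaryBiproducts C] [MonoidalCategory C] [SymmetricCategory C]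

/-- A thick tensor-ideal: a class of objects closed under isomorphism, containing 0,
satisfying two-out-of-three for distinguished triangles, closed under direct summands,
and closed under tensoring (on either side) with arbitrary objects. -/
structure IsThickTensorIdeal (J : Set C) : Prop where
  iso_closed : ∀ {a b : C}, (a ≅ b) → a ∈ J → b ∈ J
  zero_mem : (0 : C) ∈ J
  tri₃ : ∀ T : Triangle C, T ∈ (distTriang C) → T.obj₁ ∈ J → T.obj₂ ∈ J → T.obj₃ ∈ J
  tri₂ : ∀ T : Triangle C, T ∈ (distTriang C) → T.obj₁ ∈ J → T.obj₃ ∈ J → T.obj₂ ∈ J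
  tri₁ : ∀ T : Triangle C, T ∈ (distTriang C) → T.obj₂ ∈ J → T.obj₃ ∈ J → T.obj₁ ∈ J
  thick : ∀ a b : C, (a ⊞ b) ∈ J → a ∈ J ∧ b ∈ J
  ideal_right : ∀ a b : C, a ∈ J → a ⊗ b ∈ J
  ideal_left : ∀ a b : C, a ∈ J → b ⊗ a ∈ J

/-- A prime thick tensor-ideal. -/
structure IsPrimeIdeal (P : Set C) extends IsThickTensorIdeal C P : Prop where
  proper : P ≠ Set.univ
  prime : ∀ a b : C, a ⊗ b ∈ P → a ∈ P ∨ b ∈ P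

/-- The Balmer spectrum: the set of prime thick tensor-ideals. -/
def SpcK : Type _ := {P : Set C // IsPrimeIdeal C P}

/-- The support of an object. -/
def suppK (a : C) : Set (SpcK C) := {P | a ∉ P.1}

/-- The Zariski topology, generated by the basic open sets U(a) = {P | a ∈ P}. -/
instance : TopologicalSpace (SpcK C) :=
  TopologicalSpace.generateFrom {U | ∃ a : C, U = {P : SpcK C | a ∈ P.1}}

/-- A tensor-multiplicative collection of objects. -/
def IsMult (S : Set C) : Prop := 𝟙_ C ∈ S ∧ ∀ a ∈ S, ∀ b ∈ S, a ⊗ b ∈ S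

/-- The smallest thick tensor-ideal containing `E`. -/
def genIdeal (E : Set C) : Set C := ⋂₀ {J : Set C | IsThickTensorIdeal C J ∧ E ⊆ J}

/-- The n-fold tensor power of an object (with `tpow a 1 = a`). -/
def tpow (a : C) : ℕ → C
  | 0 => 𝟙_ C
  | 1 => a
  | n+2 => tpow a (n+1) ⊗ a


/-!
`P_Z = {a | U(a) ∩ Z ≠ ∅}` is the union of the primes lying in `Z`. Irreducibility of `Z` says
that two basic opens meeting `Z` meet it in a common point, i.e. any two objects of `P_Z` lie in
a common prime of `Z`, and such a union of primes is again prime. Since the `U(a)` form a basis,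
`Q ∈ closure Z ↔ Q ⊆ P_Z`; for `Z` closed this reads `Z = closure {P_Z}`. The same computation
gives `closure {P} = {Q | Q ⊆ P}`, so the spectrum is T₀ and generic points are unique.
-/

open TopologicalSpace

section
omit [SymmetricCategory C]
variable {C}

lemma IsThickTensorIdeal.biprod_mem {J : Set C} (hJ : IsThickTensorIdeal C J) {a b : C}
    (ha : a ∈ J) (hb : b ∈ J) : (a ⊞ b) ∈ J :=
  hJ.tri₂ _ (binaryBiproductTriangle_distinguished a b) ha hb

lemma IsPrimeIdeal.unit_notMem {P : Set C} (hP : IsPrimeIdeal C P) : 𝟙_ C ∉ P := fun h =>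
  hP.proper <| Set.eq_univ_of_forall fun b => hP.iso_closed (λ_ b) (hP.ideal_right _ b h)

lemma isPrimeIdeal_iUnion {ι : Type*} [Nonempty ι] {P : ι → Set C}
    (hP : ∀ i, IsPrimeIdeal C (P i))
    (hpair : ∀ {a b : C} {i j : ι}, a ∈ P i → b ∈ P j → ∃ k, a ∈ P k ∧ b ∈ P k) :
    IsPrimeIdeal C (⋃ i, P i) := by
  have pair {a b : C} (ha : a ∈ ⋃ i, P i) (hb : b ∈ ⋃ i, P i) : ∃ k, a ∈ P k ∧ b ∈ P k := by
    obtain ⟨i, hi⟩ := Set.mem_iUnion.1 ha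
    obtain ⟨j, hj⟩ := Set.mem_iUnion.1 hb
    exact hpair hi hj
  refine
    { iso_closed := fun e ha => ?_
      zero_mem := Set.mem_iUnion_of_mem (Classical.arbitrary ι) (hP _).zero_mem
      tri₃ := fun T hT h₁ h₂ => ?_
      tri₂ := fun T hT h₁ h₃ => ?_
      tri₁ := fun T hT h₂ h₃ => ?_
      thick := fun a b h => ?_
      ideal_right := fun a b ha => ?_
      ideal_left := fun a b ha => ?_
      proper := fun h => ?_
      prime := fun a b h => ?_ }
  · obtain ⟨i, hi⟩ := Set.mem_iUnion.1 ha
    exact Set.mem_iUnion_of_mem i ((hP i).iso_closed e hi)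
  · obtain ⟨k, h₁, h₂⟩ := pair h₁ h₂
    exact Set.mem_iUnion_of_mem k ((hP k).tri₃ T hT h₁ h₂)
  · obtain ⟨k, h₁, h₃⟩ := pair h₁ h₃
    exact Set.mem_iUnion_of_mem k ((hP k).tri₂ T hT h₁ h₃)
  · obtain ⟨k, h₂, h₃⟩ := pair h₂ h₃
    exact Set.mem_iUnion_of_mem k ((hP k).tri₁ T hT h₂ h₃)
  · obtain ⟨i, hi⟩ := Set.mem_iUnion.1 h
    exact ((hP i).thick a b hi).imp (Set.mem_iUnion_of_mem i) (Set.mem_iUnion_of_mem i)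
  · obtain ⟨i, hi⟩ := Set.mem_iUnion.1 ha
    exact Set.mem_iUnion_of_mem i ((hP i).ideal_right a b hi)
  · obtain ⟨i, hi⟩ := Set.mem_iUnion.1 ha
    exact Set.mem_iUnion_of_mem i ((hP i).ideal_left a b hi)
  · obtain ⟨i, hi⟩ := Set.mem_iUnion.1 (h ▸ Set.mem_univ (𝟙_ C))
    exact (hP i).unit_notMem hi
  · obtain ⟨i, hi⟩ := Set.mem_iUnion.1 h
    exact ((hP i).prime a b hi).imp (Set.mem_iUnion_of_mem i) (Set.mem_iUnion_of_mem i)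

namespace SpcK

lemma isTopologicalBasis :
    IsTopologicalBasis {U : Set (SpcK C) | ∃ a : C, U = {P : SpcK C | a ∈ P.1}} where
  exists_subset_inter := by
    rintro _ ⟨a, rfl⟩ _ ⟨b, rfl⟩ P ⟨ha, hb⟩
    exact ⟨_, ⟨a ⊞ b, rfl⟩, P.2.biprod_mem ha hb, fun Q hQ => Q.2.thick a b hQ⟩
  sUnion_eq := Set.eq_univ_of_forall fun P => ⟨_, ⟨0, rfl⟩, P.2.zero_mem⟩
  eq_generateFrom := rfl

lemma isOpen_setOf_mem (a : C) : IsOpen {P : SpcK C | a ∈ P.1} :=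
  isTopologicalBasis.isOpen ⟨a, rfl⟩

lemma mem_closure_iff {Z : Set (SpcK C)} {Q : SpcK C} :
    Q ∈ closure Z ↔ ∀ a ∈ Q.1, ({P : SpcK C | a ∈ P.1} ∩ Z).Nonempty := by
  rw [isTopologicalBasis.mem_closure_iff]
  exact ⟨fun h a ha => h _ ⟨a, rfl⟩ ha, by rintro h _ ⟨a, rfl⟩ ha; exact h a ha⟩

lemma mem_closure_singleton_iff {P Q : SpcK C} : Q ∈ closure {P} ↔ Q.1 ⊆ P.1 := by
  simp only [mem_closure_iff, Set.inter_singleton_nonempty]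
  rfl

instance : T0Space (SpcK C) :=
  ⟨fun _ _ h => Subtype.ext <| (mem_closure_singleton_iff.1 h.specializes'.mem_closure).antisymm
    (mem_closure_singleton_iff.1 h.specializes.mem_closure)⟩

lemma closure_eq_of_isPrimeIdeal {Z : Set (SpcK C)} (hZ : IsClosed Z)
    (h : IsPrimeIdeal C {a : C | ({P : SpcK C | a ∈ P.1} ∩ Z).Nonempty}) :
    Z = closure ({(⟨_, h⟩ : SpcK C)} : Set (SpcK C)) := by
  ext Q
  calc Q ∈ Z ↔ Q ∈ closure Z := by rw [hZ.closure_eq]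
    _ ↔ Q.1 ⊆ {a : C | ({P : SpcK C | a ∈ P.1} ∩ Z).Nonempty} := mem_closure_iff
    _ ↔ _ := (mem_closure_singleton_iff (P := ⟨_, h⟩)).symm

lemma setOf_inter_nonempty_eq_iUnion (Z : Set (SpcK C)) :
    {a : C | ({P : SpcK C | a ∈ P.1} ∩ Z).Nonempty} = ⋃ Q : Z, Q.1.1 :=
  Set.ext fun _ => ⟨fun ⟨Q, ha, hQ⟩ => Set.mem_iUnion_of_mem ⟨Q, hQ⟩ ha,
    fun h => let ⟨Q, ha⟩ := Set.mem_iUnion.1 h; ⟨Q.1, ha, Q.2⟩⟩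

lemma _root_.IsIrreducible.isPrimeIdeal {Z : Set (SpcK C)} (hZ : IsIrreducible Z) :
    IsPrimeIdeal C {a : C | ({P : SpcK C | a ∈ P.1} ∩ Z).Nonempty} := by
  have : Nonempty Z := hZ.nonempty.to_subtype
  rw [setOf_inter_nonempty_eq_iUnion]
  refine isPrimeIdeal_iUnion (fun Q => Q.1.2) fun {a b i j} ha hb => ?_
  obtain ⟨Q, hQZ, ha', hb'⟩ := hZ.isPreirreducible _ _ (isOpen_setOf_mem a)
    (isOpen_setOf_mem b) ⟨i, i.2, ha⟩ ⟨j, j.2, hb⟩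
  exact ⟨⟨Q, hQZ⟩, ha', hb'⟩

end SpcK

end

theorem irreducible_closed_iff_prime (Z : Set (SpcK C)) (hZ : IsClosed Z) :
    (IsIrreducible Z ↔
      IsPrimeIdeal C {a : C | ({P : SpcK C | a ∈ P.1} ∩ Z).Nonempty}) ∧
    (∀ h : IsPrimeIdeal C {a : C | ({P : SpcK C | a ∈ P.1} ∩ Z).Nonempty},
      Z = closure ({(⟨_, h⟩ : SpcK C)} : Set (SpcK C))) ∧
    (IsIrreducible Z → ∃! P : SpcK C, closure ({P} : Set (SpcK C)) = Z) := by
  refine ⟨⟨IsIrreducible.isPrimeIdeal, fun h => ?_⟩, SpcK.closure_eq_of_isPrimeIdeal hZ,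
    fun hirr => ?_⟩
  · rw [SpcK.closure_eq_of_isPrimeIdeal hZ h]
    exact isIrreducible_singleton.closure
  · have generic := (SpcK.closure_eq_of_isPrimeIdeal hZ hirr.isPrimeIdeal).symm
    exact ⟨_, generic, fun Q hQ => IsGenericPoint.eq hQ generic⟩
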